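/- Let X be a real random variable with E[X] = 0 and E[|X|³] < ∞, let σ > 0, ε > 0 and u ∈ ℝ. Then | E[Ψ''((u − εX)/σ)] − Ψ''(u/σ) − (ε² E[X²]/(2σ²)) · (2π)^{-1/2} ((u/σ)³ − 3(u/σ)) e^{-u²/(2σ²)} | ≤ ε³ E[|X|³]/(2 σ³ √(2π)), where (2π)^{-1/2}(x³ − 3x)e^{-x²/2} = Ψ''''(x) = Ψ''(x)(x² − 3) is the fourth derivative of the Gaussian tail function. -/

import Mathlib

open MeasureTheory ProbabilityTheory

/-- Second derivative of the Gaussian tail: `Ψ''(x) = (2π)^{-1/2} x e^{-x²/2}`. -/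
noncomputable def PsiD2 (x : ℝ) : ℝ :=
  (Real.sqrt (2 * Real.pi))⁻¹ * x * Real.exp (-x ^ 2 / 2)

private lemma fund_bound (g g' B : ℝ → ℝ) (hg : ∀ s, HasDerivAt g (g' s) s)
    (hg' : Continuous g') (hB : Continuous B) {h : ℝ} (hh : 0 ≤ h)
    (hbound : ∀ s ∈ Set.Icc (0:ℝ) h, |g' s| ≤ B s) :
    |g h - g 0| ≤ ∫ s in (0:ℝ)..h, B s := by
  have key : ∫ s in (0:ℝ)..h, g' s = g h - g 0 :=
    intervalIntegral.integral_eq_sub_of_hasDerivAt (fun s _ => hg s)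
      (hg'.intervalIntegrable _ _)
  rw [← key, ← Real.norm_eq_abs]
  calc ‖∫ s in (0:ℝ)..h, g' s‖ ≤ ∫ s in (0:ℝ)..h, ‖g' s‖ :=
        intervalIntegral.norm_integral_le_integral_norm hh
    _ ≤ ∫ s in (0:ℝ)..h, B s := by
        apply intervalIntegral.integral_mono_on hh (hg'.norm.intervalIntegrable _ _)
          (hB.intervalIntegrable _ _)
        intro s hs; simpa [Real.norm_eq_abs] using hbound s hs

private lemma taylor2_nonneg (f f' f'' f''' : ℝ → ℝ)
    (hf : ∀ x, HasDerivAt f (f' x) x) (hf' : ∀ x, HasDerivAt f' (f'' x) x)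
    (hf'' : ∀ x, HasDerivAt f'' (f''' x) x)
    (M : ℝ) (hM : ∀ x, |f''' x| ≤ M)
    (a h : ℝ) (hh : 0 ≤ h) :
    |f (a + h) - f a - f' a * h - f'' a * h ^ 2 / 2| ≤ M * h ^ 3 / 6 := by
  have hf''cont : Continuous f'' :=
    continuous_iff_continuousAt.2 fun x => (hf'' x).differentiableAt.continuousAt
  have hf'cont : Continuous f' :=
    continuous_iff_continuousAt.2 fun x => (hf' x).differentiableAt.continuousAt
  have hlip : ∀ x y : ℝ, |f'' x - f'' y| ≤ M * |x - y| := by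
    intro x y
    have := (convex_univ : Convex ℝ (Set.univ : Set ℝ)).norm_image_sub_le_of_norm_hasDerivWithin_le
      (f' := f''') (fun z _ => (hf'' z).hasDerivWithinAt)
      (fun z _ => by simpa [Real.norm_eq_abs] using hM z) (Set.mem_univ y) (Set.mem_univ x)
    simpa [Real.norm_eq_abs] using this
  set G : ℝ → ℝ := fun s => f' (a + s) - f' a - f'' a * s with hGdef
  have hG : ∀ s, HasDerivAt G (f'' (a + s) - f'' a) s := by
    intro s
    have h1 : HasDerivAt (fun s : ℝ => f' (a + s)) (f'' (a + s)) s := by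
      exact (HasDerivAt.comp s (hf' (a + s)) ((hasDerivAt_id s).const_add a)).congr_deriv (by ring)
    exact ((h1.sub_const (f' a)).sub ((hasDerivAt_id s).const_mul (f'' a))).congr_deriv (by ring)
  have hGbound : ∀ s ∈ Set.Icc (0:ℝ) h, |G s| ≤ M * s ^ 2 / 2 := by
    intro s hs
    have hs0 : 0 ≤ s := hs.1
    have := fund_bound G (fun t => f'' (a + t) - f'' a) (fun t => M * t) hG
      (by continuity) (by continuity) hs0
      (fun t ht => by
        have := hlip (a + t) a
        simpa [abs_of_nonneg ht.1] using this)
    have hint : ∫ t in (0:ℝ)..s, M * t = M * s ^ 2 / 2 := by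
      rw [intervalIntegral.integral_const_mul, integral_id]; ring
    simpa [hGdef, hint] using this
  set F : ℝ → ℝ := fun s => f (a + s) - f a - f' a * s - f'' a * s ^ 2 / 2 with hFdef
  have hF : ∀ s, HasDerivAt F (G s) s := by
    intro s
    have h1 : HasDerivAt (fun s : ℝ => f (a + s)) (f' (a + s)) s := by
      exact (HasDerivAt.comp s (hf (a + s)) ((hasDerivAt_id s).const_add a)).congr_deriv (by ring)
    have h2 : HasDerivAt (fun s : ℝ => f'' a * s ^ 2 / 2) (f'' a * s) s := by
      have := ((hasDerivAt_pow 2 s).const_mul (f'' a)).div_const 2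
      simpa using this.congr_deriv (by ring)
    have := ((h1.sub_const (f a)).sub ((hasDerivAt_id s).const_mul (f' a))).sub h2
    show HasDerivAt F (f' (a + s) - f' a - f'' a * s) s
    exact this.congr_deriv (by ring)
  have hGcont : Continuous G :=
    continuous_iff_continuousAt.2 fun x => (hG x).differentiableAt.continuousAt
  have := fund_bound F G (fun t => M * t ^ 2 / 2) hF hGcont (by continuity) hh hGbound
  have hint : ∫ t in (0:ℝ)..h, M * t ^ 2 / 2 = M * h ^ 3 / 6 := by
    have e : (fun t : ℝ => M * t ^ 2 / 2) = fun t : ℝ => (M / 2) * t ^ 2 := by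
      funext t; ring
    rw [e, intervalIntegral.integral_const_mul, integral_pow]
    norm_num; ring
  simpa [hFdef, hint] using this

private lemma taylor2 (f f' f'' f''' : ℝ → ℝ)
    (hf : ∀ x, HasDerivAt f (f' x) x) (hf' : ∀ x, HasDerivAt f' (f'' x) x)
    (hf'' : ∀ x, HasDerivAt f'' (f''' x) x)
    (M : ℝ) (hM : ∀ x, |f''' x| ≤ M)
    (a h : ℝ) :
    |f (a + h) - f a - f' a * h - f'' a * h ^ 2 / 2| ≤ M * |h| ^ 3 / 6 := by
  rcases le_or_gt 0 h with hh | hh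
  · simpa [abs_of_nonneg hh] using taylor2_nonneg f f' f'' f''' hf hf' hf'' M hM a h hh
  · have key := taylor2_nonneg (fun x => f (-x)) (fun x => -f' (-x)) (fun x => f'' (-x))
      (fun x => -f''' (-x))
      (fun x => by exact (HasDerivAt.comp x (hf (-x)) (hasDerivAt_neg x)).congr_deriv (by ring))
      (fun x => by
        have := (HasDerivAt.comp x (hf' (-x)) (hasDerivAt_neg x)).neg
        exact this.congr_deriv (by ring))
      (fun x => by exact (HasDerivAt.comp x (hf'' (-x)) (hasDerivAt_neg x)).congr_deriv (by ring))
      M (fun x => by simpa using hM (-x)) (-a) (-h) (by linarith)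
    have e1 : -a + -h = -(a + h) := by ring
    rw [e1] at key
    simp only [neg_neg] at key
    have e2 : f (a + h) - f a - (-(f' a)) * (-h) - f'' a * (-h) ^ 2 / 2
        = f (a + h) - f a - f' a * h - f'' a * h ^ 2 / 2 := by ring
    rw [e2] at key
    calc |f (a + h) - f a - f' a * h - f'' a * h ^ 2 / 2| ≤ M * (-h) ^ 3 / 6 := key
      _ = M * |h| ^ 3 / 6 := by rw [abs_of_neg hh]

private noncomputable def eG (x : ℝ) : ℝ := Real.exp (-x ^ 2 / 2)

private lemma hasDerivAt_eG (x : ℝ) : HasDerivAt eG (-x * eG x) x := by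
  have h1 : HasDerivAt (fun x : ℝ => -x ^ 2 / 2) (-x) x := by
    have := ((hasDerivAt_pow 2 x).neg).div_const 2
    simpa using this.congr_deriv (by ring)
  exact h1.exp.congr_deriv (by simp only [eG]; ring)

private lemma deriv1 (c x : ℝ) :
    HasDerivAt (fun x => c * x * eG x) (c * (1 - x ^ 2) * eG x) x := by
  have := ((hasDerivAt_id x).const_mul c).mul (hasDerivAt_eG x)
  have h2 := this.congr_deriv (show c * 1 * eG x + c * id x * (-x * eG x)
      = c * (1 - x ^ 2) * eG x by simp [id]; ring)
  exact h2

private lemma deriv2 (c x : ℝ) :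
    HasDerivAt (fun x => c * (1 - x ^ 2) * eG x) (c * (x ^ 3 - 3 * x) * eG x) x := by
  have hp : HasDerivAt (fun x : ℝ => c * (1 - x ^ 2)) (c * (-(2 * x))) x := by
    have := ((hasDerivAt_pow 2 x).const_sub 1).const_mul c
    simpa using this.congr_deriv (by ring)
  exact (hp.mul (hasDerivAt_eG x)).congr_deriv (by ring)

private lemma deriv3 (c x : ℝ) :
    HasDerivAt (fun x => c * (x ^ 3 - 3 * x) * eG x)
      (c * (-x ^ 4 + 6 * x ^ 2 - 3) * eG x) x := by
  have hp : HasDerivAt (fun x : ℝ => c * (x ^ 3 - 3 * x)) (c * (3 * x ^ 2 - 3)) x := by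
    have := ((hasDerivAt_pow 3 x).sub ((hasDerivAt_id x).const_mul 3)).const_mul c
    simpa using this.congr_deriv (by ring)
  exact (hp.mul (hasDerivAt_eG x)).congr_deriv (by ring)

private lemma cubic_exp_bound {t : ℝ} (ht0 : 0 ≤ t) :
    1 + t / 2 + (t / 2) ^ 2 / 2 + (t / 2) ^ 3 / 6 ≤ Real.exp (t / 2) := by
  have h := Real.sum_le_exp_of_nonneg (by positivity : (0:ℝ) ≤ t / 2) 4
  have hsum : ∑ i ∈ Finset.range 4, (t / 2) ^ i / (i.factorial : ℝ)
      = 1 + t / 2 + (t / 2) ^ 2 / 2 + (t / 2) ^ 3 / 6 := by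
    simp [Finset.sum_range_succ, Nat.factorial]
    try ring
  linarith [hsum ▸ h]

private lemma poly_bound (x : ℝ) : |(-x ^ 4 + 6 * x ^ 2 - 3)| * eG x ≤ 3 := by
  have ht0 : (0:ℝ) ≤ x ^ 2 := sq_nonneg x
  have hexp := cubic_exp_bound ht0
  have hE : eG x = (Real.exp (x ^ 2 / 2))⁻¹ := by
    rw [eG, ← Real.exp_neg]; congr 1; ring
  have hEpos : 0 < Real.exp (x ^ 2 / 2) := Real.exp_pos _
  have habs : |(-x ^ 4 + 6 * x ^ 2 - 3)| ≤ 3 * Real.exp (x ^ 2 / 2) := by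
    rw [abs_le]
    constructor
    · nlinarith [sq_nonneg (x ^ 2 - 2), mul_nonneg ht0 (sq_nonneg (x ^ 2))]
    · nlinarith [sq_nonneg (x ^ 2 - 2), mul_nonneg ht0 (sq_nonneg (x ^ 2)), sq_nonneg (x ^ 2)]
  rw [hE, mul_inv_le_iff₀' hEpos]
  linarith

private lemma psiD2_abs_le (y : ℝ) : |PsiD2 y| ≤ (Real.sqrt (2 * Real.pi))⁻¹ := by
  have hc0 : (0:ℝ) ≤ (Real.sqrt (2 * Real.pi))⁻¹ := by positivity
  have hEpos : 0 < Real.exp (-y ^ 2 / 2) := Real.exp_pos _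
  have h1 : |y| * Real.exp (-y ^ 2 / 2) ≤ 1 := by
    have hy : |y| ≤ Real.exp (y ^ 2 / 2) := by
      have h2 := Real.add_one_le_exp (y ^ 2 / 2)
      nlinarith [sq_nonneg (|y| - 1), sq_abs y]
    have hE : Real.exp (-y ^ 2 / 2) = (Real.exp (y ^ 2 / 2))⁻¹ := by
      rw [← Real.exp_neg]; congr 1; ring
    rw [hE, mul_inv_le_iff₀ (Real.exp_pos _)]
    simpa using hy
  have : |PsiD2 y| = (Real.sqrt (2 * Real.pi))⁻¹ * (|y| * Real.exp (-y ^ 2 / 2)) := by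
    rw [PsiD2, abs_mul, abs_mul, abs_of_nonneg hc0, abs_of_nonneg hEpos.le, mul_assoc]
  rw [this]
  calc (Real.sqrt (2 * Real.pi))⁻¹ * (|y| * Real.exp (-y ^ 2 / 2))
      ≤ (Real.sqrt (2 * Real.pi))⁻¹ * 1 := by
        exact mul_le_mul_of_nonneg_left h1 hc0
    _ = (Real.sqrt (2 * Real.pi))⁻¹ := mul_one _

/-- Second-order expansion of `E[Ψ''((u − εX)/σ)]`, where
`Ψ''''(x) = (2π)^{-1/2}(x³ − 3x)e^{-x²/2}`. -/
theorem mean_gaussian_tail_second_deriv_expansion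
    {Ω : Type*} [MeasurableSpace Ω] (P : Measure Ω) [IsProbabilityMeasure P]
    (X : Ω → ℝ) (hX_meas : Measurable X)
    (hX_mean : ∫ ω, X ω ∂P = 0)
    (hX3 : Integrable (fun ω => |X ω| ^ 3) P)
    (σ : ℝ) (hσ : 0 < σ) (ε : ℝ) (hε : 0 < ε) (u : ℝ) :
    |(∫ ω, PsiD2 ((u - ε * X ω) / σ) ∂P) - PsiD2 (u / σ)
        - ε ^ 2 * (∫ ω, (X ω) ^ 2 ∂P) / (2 * σ ^ 2) *
            ((Real.sqrt (2 * Real.pi))⁻¹ * ((u / σ) ^ 3 - 3 * (u / σ)) *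
              Real.exp (-u ^ 2 / (2 * σ ^ 2)))|
      ≤ ε ^ 3 * (∫ ω, |X ω| ^ 3 ∂P) / (2 * σ ^ 3 * Real.sqrt (2 * Real.pi)) := by
  set c : ℝ := (Real.sqrt (2 * Real.pi))⁻¹ with hcdef
  have hsqrt_pos : 0 < Real.sqrt (2 * Real.pi) := Real.sqrt_pos.2 (by positivity)
  have hc0 : (0:ℝ) ≤ c := by positivity
  -- the function and its derivatives
  set f : ℝ → ℝ := fun x => c * x * eG x with hfdef
  set f₁ : ℝ → ℝ := fun x => c * (1 - x ^ 2) * eG x with hf1def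
  set f₂ : ℝ → ℝ := fun x => c * (x ^ 3 - 3 * x) * eG x with hf2def
  set f₃ : ℝ → ℝ := fun x => c * (-x ^ 4 + 6 * x ^ 2 - 3) * eG x with hf3def
  have hPsi : ∀ y, PsiD2 y = f y := fun y => rfl
  have hM : ∀ x, |f₃ x| ≤ 3 * c := by
    intro x
    have hEpos : 0 < eG x := Real.exp_pos _
    have : |f₃ x| = c * (|(-x ^ 4 + 6 * x ^ 2 - 3)| * eG x) := by
      rw [hf3def]
      rw [abs_mul, abs_mul, abs_of_nonneg hc0, abs_of_nonneg hEpos.le, mul_assoc]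
    rw [this]
    calc c * (|(-x ^ 4 + 6 * x ^ 2 - 3)| * eG x) ≤ c * 3 :=
          mul_le_mul_of_nonneg_left (poly_bound x) hc0
      _ = 3 * c := by ring
  set a : ℝ := u / σ with hadef
  set hfun : Ω → ℝ := fun ω => (-(ε / σ)) * X ω with hhdef
  have harg : ∀ ω, (u - ε * X ω) / σ = a + hfun ω := by
    intro ω; rw [hadef, hhdef]; field_simp; ring
  have hKey : ∀ ω, |PsiD2 ((u - ε * X ω) / σ) - f a - f₁ a * hfun ω - f₂ a * hfun ω ^ 2 / 2|
      ≤ c * (ε / σ) ^ 3 / 2 * |X ω| ^ 3 := by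
    intro ω
    have := taylor2 f f₁ f₂ f₃ (deriv1 c) (deriv2 c) (deriv3 c) (3 * c) hM a (hfun ω)
    rw [hPsi, harg ω]
    have habsh : |hfun ω| = (ε / σ) * |X ω| := by
      rw [hhdef]
      rw [abs_mul, abs_neg, abs_of_pos (by positivity : (0:ℝ) < ε / σ)]
    calc |f (a + hfun ω) - f a - f₁ a * hfun ω - f₂ a * hfun ω ^ 2 / 2|
        ≤ 3 * c * |hfun ω| ^ 3 / 6 := this
      _ = c * (ε / σ) ^ 3 / 2 * |X ω| ^ 3 := by rw [habsh]; ring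
  -- integrability
  have hXsm : AEStronglyMeasurable X P := hX_meas.aestronglyMeasurable
  have hX1 : Integrable X P := by
    refine (hX3.add (integrable_const 1)).mono' hXsm ?_
    filter_upwards with ω
    simp only [Real.norm_eq_abs, Pi.add_apply]
    nlinarith [abs_nonneg (X ω), mul_nonneg (abs_nonneg (X ω)) (sq_nonneg (|X ω| - 1)),
      sq_nonneg (|X ω| - 1)]
  have hX2 : Integrable (fun ω => X ω ^ 2) P := by
    refine (hX3.add (integrable_const 1)).mono' (hXsm.pow 2) ?_
    filter_upwards with ω
    simp only [Real.norm_eq_abs, Pi.add_apply, abs_pow, sq_abs]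
    have h := sq_abs (X ω)
    nlinarith [abs_nonneg (X ω), mul_nonneg (abs_nonneg (X ω)) (sq_nonneg (|X ω| - 1)),
      sq_nonneg (|X ω| - 1), sq_nonneg (2 * |X ω| - 1), sq_abs (X ω)]
  have hArg_meas : Measurable (fun ω => (u - ε * X ω) / σ) :=
    (measurable_const.sub (hX_meas.const_mul ε)).div_const σ
  have hPsi_cont : Continuous PsiD2 := by
    unfold PsiD2; fun_prop
  have hA : Integrable (fun ω => PsiD2 ((u - ε * X ω) / σ)) P := by
    refine (integrable_const c).mono'
      ((hPsi_cont.measurable.comp hArg_meas).aestronglyMeasurable) ?_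
    filter_upwards with ω
    rw [Real.norm_eq_abs]
    exact psiD2_abs_le ((u - ε * X ω) / σ)
  have hterm1 : Integrable (fun ω => f₁ a * hfun ω) P := by
    have e : (fun ω => f₁ a * hfun ω) = fun ω => (f₁ a * (-(ε / σ))) * X ω := by
      funext ω; rw [hhdef]; ring
    rw [e]; exact hX1.const_mul _
  have hterm2 : Integrable (fun ω => f₂ a * hfun ω ^ 2 / 2) P := by
    have e : (fun ω => f₂ a * hfun ω ^ 2 / 2) = fun ω => (f₂ a * (ε / σ) ^ 2 / 2) * X ω ^ 2 := by
      funext ω; rw [hhdef]; ring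
    rw [e]; exact hX2.const_mul _
  set R : Ω → ℝ := fun ω =>
    PsiD2 ((u - ε * X ω) / σ) - f a - f₁ a * hfun ω - f₂ a * hfun ω ^ 2 / 2 with hRdef
  have hR : Integrable R P :=
    ((hA.sub (integrable_const (f a))).sub hterm1).sub hterm2
  -- integral of R
  have hInth : ∫ ω, f₁ a * hfun ω ∂P = 0 := by
    have e : (fun ω => f₁ a * hfun ω) = fun ω => (f₁ a * (-(ε / σ))) * X ω := by
      funext ω; rw [hhdef]; ring
    rw [e, integral_const_mul, hX_mean, mul_zero]
  have hInth2 : ∫ ω, f₂ a * hfun ω ^ 2 / 2 ∂P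
      = (f₂ a * (ε / σ) ^ 2 / 2) * ∫ ω, X ω ^ 2 ∂P := by
    have e : (fun ω => f₂ a * hfun ω ^ 2 / 2) = fun ω => (f₂ a * (ε / σ) ^ 2 / 2) * X ω ^ 2 := by
      funext ω; rw [hhdef]; ring
    rw [e, integral_const_mul]
  have hIntR : ∫ ω, R ω ∂P = (∫ ω, PsiD2 ((u - ε * X ω) / σ) ∂P) - f a
      - (f₂ a * (ε / σ) ^ 2 / 2) * ∫ ω, X ω ^ 2 ∂P := by
    have hI1 : Integrable (fun ω => PsiD2 ((u - ε * X ω) / σ) - f a) P :=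
      hA.sub (integrable_const (f a))
    have hI2 : Integrable (fun ω => PsiD2 ((u - ε * X ω) / σ) - f a - f₁ a * hfun ω) P :=
      hI1.sub hterm1
    rw [hRdef, integral_sub hI2 hterm2, integral_sub hI1 hterm1,
      integral_sub hA (integrable_const (f a)), hInth, hInth2]
    simp
  -- identify the LHS with |∫ R|
  have hexp_eq : Real.exp (-(u / σ) ^ 2 / 2) = Real.exp (-u ^ 2 / (2 * σ ^ 2)) := by
    congr 1
    rw [div_pow]
    ring
  have hLHS : (∫ ω, PsiD2 ((u - ε * X ω) / σ) ∂P) - PsiD2 (u / σ)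
        - ε ^ 2 * (∫ ω, (X ω) ^ 2 ∂P) / (2 * σ ^ 2) *
            (c * ((u / σ) ^ 3 - 3 * (u / σ)) * Real.exp (-u ^ 2 / (2 * σ ^ 2)))
      = ∫ ω, R ω ∂P := by
    rw [hIntR, hPsi (u / σ)]
    have hf2a : f₂ a = c * ((u / σ) ^ 3 - 3 * (u / σ)) * Real.exp (-u ^ 2 / (2 * σ ^ 2)) := by
      rw [hf2def, ← hexp_eq, hadef]; rfl
    rw [hf2a, hadef]
    have hσ2 : σ ^ 2 ≠ 0 := by positivity
    field_simp
  rw [hLHS]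
  -- final bound
  have habs_int : |∫ ω, R ω ∂P| ≤ ∫ ω, |R ω| ∂P := by
    simpa [Real.norm_eq_abs] using norm_integral_le_integral_norm (μ := P) R
  have hmono : ∫ ω, |R ω| ∂P ≤ ∫ ω, (c * (ε / σ) ^ 3 / 2) * |X ω| ^ 3 ∂P := by
    refine integral_mono hR.abs (hX3.const_mul _) ?_
    intro ω
    exact hKey ω
  have hfinal : ∫ ω, (c * (ε / σ) ^ 3 / 2) * |X ω| ^ 3 ∂P
      = ε ^ 3 * (∫ ω, |X ω| ^ 3 ∂P) / (2 * σ ^ 3 * Real.sqrt (2 * Real.pi)) := by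
    rw [integral_const_mul, hcdef]
    have hσ3 : σ ^ 3 ≠ 0 := by positivity
    field_simp
  calc |∫ ω, R ω ∂P| ≤ ∫ ω, |R ω| ∂P := habs_int
    _ ≤ ∫ ω, (c * (ε / σ) ^ 3 / 2) * |X ω| ^ 3 ∂P := hmono
    _ = ε ^ 3 * (∫ ω, |X ω| ^ 3 ∂P) / (2 * σ ^ 3 * Real.sqrt (2 * Real.pi)) := hfinal
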